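/- arXiv:1205.5345 — 3 statements merged into one kernel-verified Lean document; each statement's English description precedes it below -/
import Mathlib

section
/- Let ρ : EuclideanSpace ℝ (Fin 2) → ℂ be a function whose imaginary part satisfies Im ρ(x) ≥ ρ_b for all x, for some constant ρ_b > 0. If u : EuclideanSpace ℝ (Fin 2) → ℂ is twice continuously differentiable, has compact support, and satisfies the dissipative Helmholtz equation Δu(x) + ρ(x)·u(x) = 0 for every x, then u is identically zero. -/
open scoped BigOperators

/-- The Laplace operator on functions on the Euclidean plane: the sum of the second
partial derivatives with respect to the standard orthonormal basis. -/
noncomputable def laplacian (f : EuclideanSpace ℝ (Fin 2) → ℂ)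
    (x : EuclideanSpace ℝ (Fin 2)) : ℂ :=
  ∑ i : Fin 2,
    fderiv ℝ (fun y => fderiv ℝ f y (EuclideanSpace.single i (1 : ℝ))) x
      (EuclideanSpace.single i (1 : ℝ))

/-!
Multiplying the equation by `conj u` and integrating by parts twice (Green's identity) gives
`∫ conj u · Δu = -∑ᵢ ∫ |∂ᵢ u|²`, a real number. Hence
`∫ Im ρ · |u|² = -Im ∫ conj u · Δu = 0`, and since `Im ρ ≥ ρ_b > 0` and `|u|²` is
continuous, `u` vanishes identically.
-/

open MeasureTheory Complex ComplexConjugate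

section GreenIdentity

variable {𝕜 E : Type*} [RCLike 𝕜] [NormedAddCommGroup E] [NormedSpace ℝ E]

theorem ContDiff.fderiv_apply_const {F : Type*} [NormedAddCommGroup F] [NormedSpace ℝ F]
    {f : E → F} {m n : WithTop ℕ∞} (hf : ContDiff ℝ n f) (hmn : m + 1 ≤ n) (v : E) :
    ContDiff ℝ m fun y => fderiv ℝ f y v :=
  (hf.fderiv_right hmn).clm_apply contDiff_const

theorem fderiv_conj_apply {u : E → 𝕜} {x : E} (hu : DifferentiableAt ℝ u x) (v : E) :
    fderiv ℝ (fun y => conj (u y)) x v = conj (fderiv ℝ u x v) :=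
  congrArg (· v) ((RCLike.conjCLE (K := 𝕜)).hasFDerivAt.comp x hu.hasFDerivAt).fderiv

theorem ContDiff.continuous_fderiv_fderiv_apply {u : E → 𝕜} (hu : ContDiff ℝ 2 u) (v w : E) :
    Continuous fun x => fderiv ℝ (fun y => fderiv ℝ u y v) x w :=
  (hu.fderiv_apply_const (m := 1) (by norm_num) v |>.fderiv_apply_const (m := 0) (by norm_num)
    w).continuous

variable [FiniteDimensional ℝ E] [MeasurableSpace E] [BorelSpace E] {μ : Measure E}
  [μ.IsAddHaarMeasure]

theorem integral_conj_mul_fderiv_fderiv_apply {u : E → 𝕜} (hu : ContDiff ℝ 2 u)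
    (hsupp : HasCompactSupport u) (v : E) :
    ∫ x, conj (u x) * fderiv ℝ (fun y => fderiv ℝ u y v) x v ∂μ
      = -((∫ x, ‖fderiv ℝ u x v‖ ^ 2 ∂μ : ℝ) : 𝕜) := by
  have hDu : ContDiff ℝ 1 fun y => fderiv ℝ u y v := hu.fderiv_apply_const (by norm_num) v
  have hconj : ContDiff ℝ 2 fun y => conj (u y) := (RCLike.conjCLE (K := 𝕜)).contDiff.comp hu
  have hconj_supp : HasCompactSupport fun y => conj (u y) := hsupp.comp_left (map_zero _)
  have hDu_supp : HasCompactSupport fun y => fderiv ℝ u y v := hsupp.fderiv_apply ℝ v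
  have hsq : ∀ x, fderiv ℝ (fun y => conj (u y)) x v * fderiv ℝ u x v
      = ((‖fderiv ℝ u x v‖ ^ 2 : ℝ) : 𝕜) := fun x => by
    rw [fderiv_conj_apply (hu.differentiable two_ne_zero x), RCLike.conj_mul]; norm_cast
  rw [integral_mul_fderiv_eq_neg_fderiv_mul_of_integrable, funext hsq, integral_ofReal]
  · simp only [hsq]
    exact (RCLike.continuous_ofReal.comp (hDu.continuous.norm.pow 2))
      |>.integrable_of_hasCompactSupport
        (hDu_supp.comp_left (g := fun z => ((‖z‖ ^ 2 : ℝ) : 𝕜)) (by simp))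
  · exact (hconj.continuous.mul (hu.continuous_fderiv_fderiv_apply v v))
      |>.integrable_of_hasCompactSupport hconj_supp.mul_right
  · exact (hconj.continuous.mul hDu.continuous).integrable_of_hasCompactSupport
      hconj_supp.mul_right
  · exact fun x _ => hconj.differentiable two_ne_zero x
  · exact fun x _ => hDu.differentiable one_ne_zero x

end GreenIdentity

theorem ContDiff.continuous_laplacian {u : EuclideanSpace ℝ (Fin 2) → ℂ}
    (hu : ContDiff ℝ 2 u) : Continuous (laplacian u) :=
  continuous_finsetSum _ fun _ _ => hu.continuous_fderiv_fderiv_apply _ _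

theorem HasCompactSupport.conj_mul_laplacian {u : EuclideanSpace ℝ (Fin 2) → ℂ}
    (hsupp : HasCompactSupport u) : HasCompactSupport fun x => conj (u x) * laplacian u x :=
  (hsupp.comp_left (map_zero _)).mul_right

theorem integral_im_conj_mul_laplacian_eq_zero {u : EuclideanSpace ℝ (Fin 2) → ℂ}
    (hu : ContDiff ℝ 2 u) (hsupp : HasCompactSupport u) :
    ∫ x, (conj (u x) * laplacian u x).im = 0 := by
  have hconj : Continuous fun x => conj (u x) := continuous_conj.comp hu.continuous
  have hterm : ∀ i : Fin 2, Integrable fun x => conj (u x) * fderiv ℝ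
      (fun y => fderiv ℝ u y (EuclideanSpace.single i 1)) x (EuclideanSpace.single i 1) :=
    fun _ => (hconj.mul (hu.continuous_fderiv_fderiv_apply _ _)).integrable_of_hasCompactSupport
      (hsupp.comp_left (map_zero _)).mul_right
  have hint : Integrable fun x => conj (u x) * laplacian u x :=
    (hconj.mul hu.continuous_laplacian).integrable_of_hasCompactSupport hsupp.conj_mul_laplacian
  simp_rw [← RCLike.im_to_complex]
  rw [integral_im hint]
  simp only [laplacian, Finset.mul_sum]
  rw [integral_finsetSum _ fun i _ => hterm i]
  simp [integral_conj_mul_fderiv_fderiv_apply hu hsupp]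

theorem dissipative_helmholtz_uniqueness
    (ρ : EuclideanSpace ℝ (Fin 2) → ℂ) (ρ_b : ℝ) (hρ_b : 0 < ρ_b)
    (hρ : ∀ x, ρ_b ≤ (ρ x).im)
    (u : EuclideanSpace ℝ (Fin 2) → ℂ)
    (hu : ContDiff ℝ 2 u) (hsupp : HasCompactSupport u)
    (hsol : ∀ x, laplacian u x + ρ x * u x = 0) :
    u = 0 := by
  -- `ρ` need not be measurable, so `Im ρ · |u|²` is handled as the continuous
  -- function `-Im (conj u · Δu)`.
  set g := fun x => -(conj (u x) * laplacian u x).im with hg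
  have hg_eq : ∀ x, g x = (ρ x).im * ‖u x‖ ^ 2 := fun x => by
    simp only [hg]
    rw [eq_neg_of_add_eq_zero_left (hsol x), mul_neg, mul_left_comm, conj_mul']
    simp [← ofReal_pow]
  have hg_cont : Continuous g :=
    (continuous_im.comp ((continuous_conj.comp hu.continuous).mul
      hu.continuous_laplacian)).neg
  have hg_supp : HasCompactSupport g := (hsupp.conj_mul_laplacian.comp_left rfl).neg
  have hg_int : ∫ x, g x = 0 := by
    rw [hg, integral_neg, integral_im_conj_mul_laplacian_eq_zero hu hsupp, neg_zero]
  have hg_nonneg : 0 ≤ g := fun y => by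
    rw [hg_eq]
    have := hρ_b.trans_le (hρ y)
    positivity
  funext x
  by_contra hx
  have hgx : g x ≠ 0 := by
    rw [hg_eq]
    have := hρ_b.trans_le (hρ x)
    have : u x ≠ 0 := hx
    positivity
  exact (hg_cont.integral_pos_of_hasCompactSupport_nonneg_nonzero hg_supp hg_nonneg hgx).ne' hg_int
end

section
/- Let L > 0 and let φ, ψ : ℝ → ℂ be continuous with compact support. Then the Floquet–Bloch transform is an isometry for the L² inner products: ∫_{k = −π/L}^{π/L} ∫_{y = −L/2}^{L/2} Fφ(y; k) · conj(Fψ(y; k)) dy dk = ∫_{ℝ} φ(y) · conj(ψ(y)) dy. -/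
/-!
On a period cell `y ∈ [-L/2, L/2]` only finitely many translates `φ (y + q L)` are nonzero, so
`k ↦ Fφ(y; k)` is a trigonometric polynomial with coefficients `φ (y + q L)`. Integrating
`Fφ · conj Fψ` over a period in `k` kills the off-diagonal terms by orthogonality of the
exponentials `e^{-iqkL}`, which leaves `Σ_q ∫_{-L/2}^{L/2} φ (y + q L) conj ψ (y + q L) dy`;
the translated cells tile `ℝ`, so this is `∫ φ conj ψ`.
-/

open scoped Real
open MeasureTheory

/-- The Floquet–Bloch transform of period `L` of a function `φ : ℝ → ℂ`:
`Fφ(y; k) = √(L/(2π)) · Σ_{q ∈ ℤ} φ(y + qL) e^{−iqkL}`. -/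
noncomputable def floquetBloch (L : ℝ) (φ : ℝ → ℂ) (y k : ℝ) : ℂ :=
  (Real.sqrt (L / (2 * π)) : ℂ) *
    ∑' q : ℤ, φ (y + q * L) * Complex.exp (-Complex.I * q * k * L)

open Complex ComplexConjugate intervalIntegral

theorem HasCompactSupport.exists_finset_comp_add_int_mul_eq_zero {E : Type*} [Zero E]
    {φ : ℝ → E} (hφ : HasCompactSupport φ) {L : ℝ} (hL : L ≠ 0) {K : Set ℝ}
    (hK : IsCompact K) : ∃ F : Finset ℤ, ∀ y ∈ K, ∀ q ∉ F, φ (y + q * L) = 0 := by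
  have hfin : ((fun q : ℤ => (q : ℝ) * L) ⁻¹'
      ((fun p : ℝ × ℝ => p.1 - p.2) '' (tsupport φ ×ˢ K))).Finite :=
    tendsto_cofinite_cocompact_iff.mp
      ((Filter.tendsto_cocompact_mul_right₀ hL).comp Int.tendsto_coe_cofinite) _
      ((hφ.prod hK).image continuous_sub)
  refine ⟨hfin.toFinset, fun y hy q hq => image_eq_zero_of_notMem_tsupport fun hmem => hq ?_⟩
  rw [Set.Finite.mem_toFinset]
  exact ⟨(y + q * L, y), ⟨hmem, hy⟩, add_sub_cancel_left y _⟩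

theorem MeasureTheory.Integrable.hasSum_intervalIntegral_comp_add_int_mul {E : Type*}
    [NormedAddCommGroup E] [NormedSpace ℝ E] {f : ℝ → E} (hf : Integrable f) {L : ℝ}
    (hL : 0 < L) (a : ℝ) :
    HasSum (fun q : ℤ => ∫ y in a..a + L, f (y + q * L)) (∫ y, f y) := by
  have hcells := hasSum_integral_iUnion (fun _ => measurableSet_Ioc)
    (Set.pairwise_disjoint_Ioc_add_zsmul a L) hf.integrableOn
  rw [iUnion_Ioc_add_zsmul hL, setIntegral_univ] at hcells
  convert hcells using 2 with q
  rw [integral_comp_add_right, integral_of_le (by linarith)]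
  simp only [zsmul_eq_mul, Int.cast_add, Int.cast_one]
  ring_nf

theorem intervalIntegral_intervalIntegral_finset_sum_mul {𝕜 ι : Type*} [RCLike 𝕜]
    {a b c d : ℝ} (s : Finset ι) {u v : ι → ℝ → 𝕜}
    (hu : ∀ i ∈ s, IntervalIntegrable (u i) volume a b)
    (hv : ∀ i ∈ s, IntervalIntegrable (v i) volume c d) :
    ∫ k in c..d, ∫ y in a..b, ∑ i ∈ s, u i y * v i k
      = ∑ i ∈ s, (∫ y in a..b, u i y) * ∫ k in c..d, v i k := by
  have hinner (k : ℝ) : ∫ y in a..b, ∑ i ∈ s, u i y * v i k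
      = ∑ i ∈ s, (∫ y in a..b, u i y) * v i k := by
    rw [integral_finsetSum fun i hi => (hu i hi).mul_const _]
    simp only [intervalIntegral.integral_mul_const]
  simp only [hinner]
  rw [integral_finsetSum fun i hi => (hv i hi).const_mul _]
  simp only [intervalIntegral.integral_const_mul]

theorem integral_exp_neg_I_int_mul {L : ℝ} (hL : L ≠ 0) (n : ℤ) :
    ∫ k in (-π / L)..(π / L), cexp (-I * n * k * L)
      = if n = 0 then ((2 * π / L : ℝ) : ℂ) else 0 := by
  split_ifs with hn
  · simp only [hn, Int.cast_zero, mul_zero, zero_mul, exp_zero, intervalIntegral.integral_const,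
      real_smul, mul_one]
    push_cast
    ring
  · have hc : -I * n * L ≠ 0 := by simp [hn, hL, I_ne_zero]
    simp_rw [show ∀ k : ℝ, -I * n * k * L = -I * n * L * k from fun k => by ring]
    rw [integral_exp_mul_complex hc, div_eq_zero_iff, sub_eq_zero]
    left
    have hL' : (L : ℂ) ≠ 0 := ofReal_ne_zero.mpr hL
    refine exp_eq_exp_iff_exists_int.mpr ⟨-n, ?_⟩
    push_cast
    field_simp
    ring

theorem integral_exp_mul_conj_exp {L : ℝ} (hL : L ≠ 0) (q r : ℤ) :
    ∫ k in (-π / L)..(π / L), cexp (-I * q * k * L) * conj (cexp (-I * r * k * L))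
      = if q = r then ((2 * π / L : ℝ) : ℂ) else 0 := by
  have hprod (k : ℝ) : cexp (-I * q * k * L) * conj (cexp (-I * r * k * L))
      = cexp (-I * (q - r : ℤ) * k * L) := by
    rw [← exp_conj, ← exp_add]
    simp only [map_mul, map_neg, conj_I, conj_ofReal, map_intCast]
    push_cast
    ring_nf
  simp only [hprod, integral_exp_neg_I_int_mul hL, sub_eq_zero]

theorem floquetBloch_eq_sum {L : ℝ} {φ : ℝ → ℂ} {y : ℝ} {F : Finset ℤ}
    (hF : ∀ q ∉ F, φ (y + q * L) = 0) (k : ℝ) :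
    floquetBloch L φ y k
      = Real.sqrt (L / (2 * π)) * ∑ q ∈ F, φ (y + q * L) * cexp (-I * q * k * L) := by
  rw [floquetBloch, tsum_eq_sum fun q hq => by rw [hF q hq, zero_mul]]

theorem floquetBloch_mul_conj_eq_sum {L : ℝ} (hL : 0 ≤ L) {φ ψ : ℝ → ℂ} {y : ℝ}
    {F : Finset ℤ} (hφ : ∀ q ∉ F, φ (y + q * L) = 0) (hψ : ∀ q ∉ F, ψ (y + q * L) = 0)
    (k : ℝ) :
    floquetBloch L φ y k * conj (floquetBloch L ψ y k)
      = ∑ p ∈ F ×ˢ F, ((L / (2 * π) : ℝ) * (φ (y + p.1 * L) * conj (ψ (y + p.2 * L))))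
          * (cexp (-I * p.1 * k * L) * conj (cexp (-I * p.2 * k * L))) := by
  have hsq :
      (Real.sqrt (L / (2 * π)) : ℂ) * Real.sqrt (L / (2 * π)) = (L / (2 * π) : ℝ) := by
    rw [← ofReal_mul, Real.mul_self_sqrt (by positivity)]
  rw [floquetBloch_eq_sum hφ, floquetBloch_eq_sum hψ, map_mul, map_sum, conj_ofReal,
    mul_mul_mul_comm, hsq, Finset.sum_mul_sum, Finset.mul_sum, Finset.sum_product]
  refine Finset.sum_congr rfl fun q _ => ?_
  rw [Finset.mul_sum]
  refine Finset.sum_congr rfl fun r _ => ?_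
  rw [map_mul]
  ring

theorem floquetBloch_isometry (L : ℝ) (hL : 0 < L) (φ ψ : ℝ → ℂ)
    (hcontφ : Continuous φ) (hsuppφ : HasCompactSupport φ)
    (hcontψ : Continuous ψ) (hsuppψ : HasCompactSupport ψ) :
    (∫ k in (-π / L)..(π / L), ∫ y in (-L / 2)..(L / 2),
        floquetBloch L φ y k * (starRingEnd ℂ) (floquetBloch L ψ y k))
      = ∫ y : ℝ, φ y * (starRingEnd ℂ) (ψ y) := by
  obtain ⟨Fφ, hFφ⟩ := hsuppφ.exists_finset_comp_add_int_mul_eq_zero hL.ne' isCompact_uIcc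
  obtain ⟨Fψ, hFψ⟩ := hsuppψ.exists_finset_comp_add_int_mul_eq_zero hL.ne' isCompact_uIcc
  set F := Fφ ∪ Fψ
  have hφF : ∀ y ∈ Set.uIcc (-L / 2) (L / 2), ∀ q ∉ F, φ (y + q * L) = 0 :=
    fun y hy q hq => hFφ y hy q fun h => hq (Finset.mem_union_left _ h)
  have hψF : ∀ y ∈ Set.uIcc (-L / 2) (L / 2), ∀ q ∉ F, ψ (y + q * L) = 0 :=
    fun y hy q hq => hFψ y hy q fun h => hq (Finset.mem_union_right _ h)
  set f := fun y => φ y * conj (ψ y)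
  have hf : Integrable f :=
    (by fun_prop : Continuous f).integrable_of_hasCompactSupport hsuppφ.mul_right
  have hcells := hf.hasSum_intervalIntegral_comp_add_int_mul hL (-L / 2)
  rw [show -L / 2 + L = L / 2 by ring] at hcells
  have hcancel : L / (2 * π) * (2 * π / L) = 1 := by field_simp
  calc _ = ∑ p ∈ F ×ˢ F,
          (∫ y in (-L / 2)..(L / 2),
            (L / (2 * π) : ℝ) * (φ (y + p.1 * L) * conj (ψ (y + p.2 * L))))
          * ∫ k in (-π / L)..(π / L),
              cexp (-I * p.1 * k * L) * conj (cexp (-I * p.2 * k * L)) := by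
        rw [← intervalIntegral_intervalIntegral_finset_sum_mul]
        · exact integral_congr fun k _ => integral_congr fun y hy =>
            floquetBloch_mul_conj_eq_sum hL.le (hφF y hy) (hψF y hy) k
        all_goals exact fun p _ => Continuous.intervalIntegrable (by fun_prop) _ _
    _ = ∑ q ∈ F, ∫ y in (-L / 2)..(L / 2), f (y + q * L) := by
        simp only [integral_exp_mul_conj_exp hL.ne', mul_ite, mul_zero, Finset.sum_product,
          Finset.sum_ite_eq, intervalIntegral.integral_const_mul]
        refine Finset.sum_congr rfl fun q hq => ?_
        rw [if_pos hq, mul_right_comm, ← ofReal_mul, hcancel, ofReal_one, one_mul]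
    _ = ∫ y, f y := (hasSum_sum_of_ne_finset_zero fun q hq => ?_).unique hcells
  refine (integral_congr fun y hy => ?_).trans integral_zero
  simp only [f, hφF y hy q hq, zero_mul]
end

section
/- Let (X, μ) be a measure space and Θ : X → X a measurable measure-preserving bijection with measurable inverse such that Θ ∘ Θ ∘ Θ = id. Let S ⊆ X be a measurable set such that the three sets S, Θ(S), Θ(Θ(S)) cover X up to a μ-null set and have pairwise μ-null intersections. Given a measurable ψ : X → ℂ that is square-integrable on S, define its symmetric extension Eψ : X → ℂ by Eψ = ψ on S, Eψ = ψ ∘ Θ⁻¹ on Θ(S), and Eψ = ψ ∘ Θ⁻¹ ∘ Θ⁻¹ on Θ(Θ(S)). Then for every square-integrable φ : X → ℂ satisfying φ ∘ Θ = φ μ-almost everywhere, one has ∫_S φ · conj(ψ) dμ = (1/3) · ∫_X φ · conj(Eψ) dμ. -/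
/-!
Write `f = φ · conj (Eψ)`. Since `Θ` permutes `S`, `Θ S`, `Θ² S` cyclically and these sets
partition `X` up to null sets, the extension `Eψ` is `Θ`-invariant almost everywhere, hence so is
`f`. As `Θ` preserves `μ`, the integral of an invariant function over each of the three translates
of `S` equals its integral over `S`, so `∫ f = 3 ∫_S f`, and `f = φ · conj ψ` on `S`.
-/

open MeasureTheory Set

namespace MeasureTheory

variable {X E : Type*} [MeasurableSpace X] [NormedAddCommGroup E]
  {μ : Measure X} {Θ : X → X} {f : X → E}

theorem IntegrableOn.image_of_comp_ae_eq {s : Set X} (hfs : IntegrableOn f s μ)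
    (hΘ : MeasurePreserving Θ μ μ) (he : MeasurableEmbedding Θ) (hf : f ∘ Θ =ᵐ[μ] f) :
    IntegrableOn f (Θ '' s) μ :=
  (hΘ.integrableOn_image he).2 <| hfs.congr_fun_ae (ae_restrict_of_ae hf.symm)

variable [NormedSpace ℝ E]

theorem setIntegral_image_of_comp_ae_eq (hΘ : MeasurePreserving Θ μ μ)
    (he : MeasurableEmbedding Θ) (hf : f ∘ Θ =ᵐ[μ] f) (s : Set X) :
    ∫ x in Θ '' s, f x ∂μ = ∫ x in s, f x ∂μ := by
  rw [hΘ.setIntegral_image_emb he]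
  exact integral_congr_ae (ae_restrict_of_ae hf)

theorem integral_eq_three_smul_setIntegral_of_comp_ae_eq (hΘ : MeasurePreserving Θ μ μ)
    (he : MeasurableEmbedding Θ) (hf : f ∘ Θ =ᵐ[μ] f) {s : Set X} (hs : MeasurableSet s)
    (hfs : IntegrableOn f s μ) (hcover : μ ((s ∪ Θ '' s ∪ Θ '' (Θ '' s))ᶜ) = 0)
    (h01 : AEDisjoint μ s (Θ '' s)) (h02 : AEDisjoint μ s (Θ '' (Θ '' s)))
    (h12 : AEDisjoint μ (Θ '' s) (Θ '' (Θ '' s))) :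
    ∫ x, f x ∂μ = 3 • ∫ x in s, f x ∂μ := by
  have hfs₁ := hfs.image_of_comp_ae_eq hΘ he hf
  have hfs₂ := hfs₁.image_of_comp_ae_eq hΘ he hf
  have hs₁ := he.measurableSet_image.2 hs
  have hs₂ := he.measurableSet_image.2 hs₁
  have hcover' : (s ∪ Θ '' s ∪ Θ '' (Θ '' s) : Set X) =ᵐ[μ] univ := by
    rwa [ae_eq_univ]
  calc ∫ x, f x ∂μ = ∫ x in s ∪ Θ '' s ∪ Θ '' (Θ '' s), f x ∂μ := by
        rw [setIntegral_congr_set hcover', setIntegral_univ]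
    _ = ∫ x in s, f x ∂μ + ∫ x in Θ '' s, f x ∂μ + ∫ x in Θ '' (Θ '' s), f x ∂μ := by
        rw [setIntegral_union₀ (h02.union_left h12) hs₂.nullMeasurableSet (hfs.union hfs₁) hfs₂,
          setIntegral_union₀ h01 hs₁.nullMeasurableSet hfs hfs₁]
    _ = 3 • ∫ x in s, f x ∂μ := by
        simp only [setIntegral_image_of_comp_ae_eq hΘ he hf]
        abel

end MeasureTheory

section CyclicExtension

variable {X α : Type*} (Θ : X ≃ X) (S : Set X) (ψ : X → α)

open Classical in
noncomputable def cyclicExtension : X → α := fun x =>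
  if x ∈ S then ψ x
  else if x ∈ Θ '' S then ψ (Θ.symm x)
  else ψ (Θ.symm (Θ.symm x))

variable {Θ S ψ}

theorem cyclicExtension_of_mem {x : X} (hx : x ∈ S) : cyclicExtension Θ S ψ x = ψ x :=
  if_pos hx

theorem cyclicExtension_apply_apply (hΘ3 : ∀ x, Θ (Θ (Θ x)) = x) {x : X}
    (hcover : x ∈ S ∪ Θ '' S ∪ Θ '' (Θ '' S)) (h01 : x ∉ S ∩ Θ '' S)
    (h02 : x ∉ S ∩ Θ '' (Θ '' S)) (h12 : x ∉ Θ '' S ∩ Θ '' (Θ '' S)) :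
    cyclicExtension Θ S ψ (Θ x) = cyclicExtension Θ S ψ x := by
  have hsymm : Θ.symm x = Θ (Θ x) := Θ.symm_apply_eq.2 (hΘ3 x).symm
  have hS : Θ x ∈ S ↔ x ∈ Θ '' (Θ '' S) := by
    rw [image_image]
    exact ⟨fun h => ⟨Θ x, h, hΘ3 x⟩, by rintro ⟨y, hy, rfl⟩; rwa [hΘ3]⟩
  have hB : Θ x ∈ Θ '' S ↔ x ∈ S := Θ.injective.mem_set_image
  have hC : Θ x ∈ Θ '' (Θ '' S) ↔ x ∈ Θ '' S := Θ.injective.mem_set_image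
  unfold cyclicExtension
  grind

theorem cyclicExtension_comp_ae_eq [MeasurableSpace X] (μ : Measure X)
    (hΘ3 : ∀ x, Θ (Θ (Θ x)) = x) (hcover : μ ((S ∪ Θ '' S ∪ Θ '' (Θ '' S))ᶜ) = 0)
    (h01 : μ (S ∩ Θ '' S) = 0) (h02 : μ (S ∩ Θ '' (Θ '' S)) = 0)
    (h12 : μ (Θ '' S ∩ Θ '' (Θ '' S)) = 0) :
    cyclicExtension Θ S ψ ∘ Θ =ᵐ[μ] cyclicExtension Θ S ψ := by
  filter_upwards [mem_ae_iff.2 hcover, measure_eq_zero_iff_ae_notMem.1 h01,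
    measure_eq_zero_iff_ae_notMem.1 h02, measure_eq_zero_iff_ae_notMem.1 h12]
    with x hx hx01 hx02 hx12
  exact cyclicExtension_apply_apply hΘ3 hx hx01 hx02 hx12

end CyclicExtension

open MeasureTheory Classical in

theorem restriction_extension_duality_general
    {X : Type*} [MeasurableSpace X] (μ : Measure X)
    (Θ : X ≃ X) (hΘmeas : Measurable Θ) (hΘinv : Measurable Θ.symm)
    (hΘpres : MeasurePreserving Θ μ μ)
    (hΘ3 : ∀ x, Θ (Θ (Θ x)) = x)
    (S : Set X) (hS : MeasurableSet S)
    (hcover : μ ((S ∪ Θ '' S ∪ Θ '' (Θ '' S))ᶜ) = 0)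
    (h01 : μ (S ∩ Θ '' S) = 0)
    (h02 : μ (S ∩ Θ '' (Θ '' S)) = 0)
    (h12 : μ ((Θ '' S) ∩ Θ '' (Θ '' S)) = 0)
    (ψ : X → ℂ) (hψ : MemLp ψ 2 (μ.restrict S))
    (Eψ : X → ℂ)
    (hEψ : Eψ = fun x =>
      if x ∈ S then ψ x
      else if x ∈ Θ '' S then ψ (Θ.symm x)
      else ψ (Θ.symm (Θ.symm x)))
    (φ : X → ℂ) (hφ : MemLp φ 2 μ)
    (hφΘ : (φ ∘ Θ) =ᵐ[μ] φ) :
    ∫ x in S, φ x * (starRingEnd ℂ) (ψ x) ∂μ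
      = (1 / 3) * ∫ x, φ x * (starRingEnd ℂ) (Eψ x) ∂μ := by
  change Eψ = cyclicExtension Θ S ψ at hEψ
  subst hEψ
  set f : X → ℂ := fun x => φ x * starRingEnd ℂ (cyclicExtension Θ S ψ x)
  have hemb : MeasurableEmbedding Θ := (MeasurableEquiv.mk Θ hΘmeas hΘinv).measurableEmbedding
  have hfΘ : f ∘ Θ =ᵐ[μ] f := by
    filter_upwards [hφΘ, cyclicExtension_comp_ae_eq μ hΘ3 hcover h01 h02 h12] with x hφx hEx
    simp only [f, Function.comp_apply] at hφx hEx ⊢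
    rw [hφx, hEx]
  have hfS : EqOn f (fun x => φ x * starRingEnd ℂ (ψ x)) S := fun x hx => by
    simp only [f, cyclicExtension_of_mem hx]
  have hint : IntegrableOn (fun x => φ x * starRingEnd ℂ (ψ x)) S μ :=
    (hφ.restrict S).integrable_mul hψ.star
  rw [integral_eq_three_smul_setIntegral_of_comp_ae_eq hΘpres hemb hfΘ hS
    (hint.congr_fun hfS.symm hS) hcover h01 h02 h12, setIntegral_congr_fun hS hfS]
  ring

open MeasureTheory Classical in
theorem restriction_extension_duality
    {X : Type*} [MeasurableSpace X] (μ : Measure X)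
    (Θ : X ≃ X) (hΘmeas : Measurable Θ) (hΘinv : Measurable Θ.symm)
    (hΘpres : MeasurePreserving Θ μ μ)
    (hΘ3 : ∀ x, Θ (Θ (Θ x)) = x)
    (S : Set X) (hS : MeasurableSet S)
    (hcover : μ ((S ∪ Θ '' S ∪ Θ '' (Θ '' S))ᶜ) = 0)
    (h01 : μ (S ∩ Θ '' S) = 0)
    (h02 : μ (S ∩ Θ '' (Θ '' S)) = 0)
    (h12 : μ ((Θ '' S) ∩ Θ '' (Θ '' S)) = 0)
    (ψ : X → ℂ) (hψmeas : Measurable ψ) (hψ : MemLp ψ 2 (μ.restrict S))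
    (Eψ : X → ℂ)
    (hEψ : Eψ = fun x =>
      if x ∈ S then ψ x
      else if x ∈ Θ '' S then ψ (Θ.symm x)
      else ψ (Θ.symm (Θ.symm x)))
    (φ : X → ℂ) (hφ : MemLp φ 2 μ)
    (hφΘ : (φ ∘ Θ) =ᵐ[μ] φ) :
    ∫ x in S, φ x * (starRingEnd ℂ) (ψ x) ∂μ
      = (1 / 3) * ∫ x, φ x * (starRingEnd ℂ) (Eψ x) ∂μ :=
  restriction_extension_duality_general μ Θ hΘmeas hΘinv hΘpres hΘ3 S hS hcover h01 h02 h12 ψ hψ Eψ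
    hEψ φ hφ hφΘ
end
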